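/- arXiv:1711.06327 — 4 statements merged into one kernel-verified Lean document; each statement's English description precedes it below -/
import Mathlib

section
/- (ODE for the stationary characteristic function) Let f(x) = ∑_{l=0}^{d_f} a_l x^l and G(x) = ∑_{l=0}^{d_g} b_l x^l be real polynomials (with G playing the role of g²), let ν be a measure on ℝ with ν({0}) = 0 and ∫ y² dν(y) < ∞, and define the characteristic exponent η(ω) = ∫ (e^{iωy} − 1 − iωy) dν(y). Let n = max(d_f, d_g) and let μ be a probability measure on ℝ with ∫ |x|^n dμ(x) < ∞ that satisfies the stationarity condition: for every ω ∈ ℝ, ∫ [ iω f(x) + (1/2)(iω)² G(x) + η(ω) ] e^{iωx} dμ(x) = 0. Then the characteristic function φ(ω) = ∫ e^{iωx} dμ(x) is n times differentiable and satisfies, for every ω ∈ ℝ, the ordinary differential equation iω ∑_{l=0}^{d_f} a_l i^{−l} φ^{(l)}(ω) + (1/2)(iω)² ∑_{l=0}^{d_g} b_l i^{−l} φ^{(l)}(ω) + η(ω) φ(ω) = 0, where φ^{(l)} denotes the l-th iterated derivative of φ. -/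
open MeasureTheory Complex Finset

/-!
A finite `n`-th moment makes `φ` of class `Cⁿ` with `φ⁽ˡ⁾(ω) = iˡ ∫ xˡ e^{iωx} dμ(x)` for `l ≤ n`
(differentiation under the integral sign). Thus `i⁻ˡ φ⁽ˡ⁾(ω)` is the `l`-th moment against `e^{iωx}`,
and the ODE is the stationarity condition with the integral distributed over its terms.
-/

lemma memLp_id_of_integrable_abs_pow {μ : Measure ℝ} {n : ℕ}
    (h : Integrable (fun x : ℝ => |x| ^ n) μ) : MemLp id n μ := by
  rcases eq_or_ne n 0 with rfl | hn
  · simpa using aestronglyMeasurable_id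
  · rw [← integrable_norm_rpow_iff aestronglyMeasurable_id (by simpa) (by simp)]
    simpa using h

section CharFun

variable {μ : Measure ℝ} [IsFiniteMeasure μ]

lemma integrable_pow_mul_cexp {l : ℕ} (hl : MemLp id l μ) (t : ℝ) :
    Integrable (fun x : ℝ => (x : ℂ) ^ l * exp (t * x * I)) μ := by
  refine hl.integrable_norm_pow'.mono' (by fun_prop) (ae_of_all _ fun x => ?_)
  rw [norm_mul, ← ofReal_mul, norm_exp_ofReal_mul_I]
  simp

lemma integrable_sum_pow_mul_cexp {d : ℕ} (hd : MemLp id d μ) (c : ℕ → ℂ) (t : ℝ) :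
    Integrable (fun x : ℝ => (∑ l ∈ range (d + 1), c l * (x : ℂ) ^ l) * exp (t * x * I)) μ := by
  simp only [Finset.sum_mul]
  refine integrable_finsetSum _ fun l hl => ?_
  have hl : MemLp id l μ := hd.mono_exponent (by simpa [Nat.lt_succ_iff] using hl)
  simpa only [mul_assoc] using (integrable_pow_mul_cexp hl t).const_mul (c l)

lemma I_zpow_neg_mul_iteratedDeriv_charFun {l : ℕ} (hl : MemLp id l μ) (t : ℝ) :
    I ^ (-(l : ℤ)) * iteratedDeriv l (charFun μ) t = ∫ x, (x : ℂ) ^ l * exp (t * x * I) ∂μ := by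
  rw [iteratedDeriv_charFun hl, zpow_neg, zpow_natCast,
    inv_mul_cancel_left₀ (pow_ne_zero _ I_ne_zero)]

lemma sum_mul_iteratedDeriv_charFun {d : ℕ} (hd : MemLp id d μ) (c : ℕ → ℂ) (t : ℝ) :
    ∑ l ∈ range (d + 1), c l * I ^ (-(l : ℤ)) * iteratedDeriv l (charFun μ) t
      = ∫ x, (∑ l ∈ range (d + 1), c l * (x : ℂ) ^ l) * exp (t * x * I) ∂μ := by
  have hmem : ∀ l ∈ range (d + 1), MemLp id l μ := fun l hl =>
    hd.mono_exponent (by simpa [Nat.lt_succ_iff] using hl)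
  simp only [Finset.sum_mul]
  rw [integral_finsetSum _ fun l hl => ?_]
  · refine sum_congr rfl fun l hl => ?_
    rw [mul_assoc, I_zpow_neg_mul_iteratedDeriv_charFun (hmem l hl), ← integral_const_mul]
    simp only [mul_assoc]
  · simpa only [mul_assoc] using (integrable_pow_mul_cexp (hmem l hl) t).const_mul (c l)

end CharFun

theorem stationary_charFun_ode_general
    (d_f d_g : ℕ) (a b : ℕ → ℝ)
    (η : ℝ → ℂ)
    (n : ℕ) (hn : n = max d_f d_g)
    (μ : Measure ℝ) [IsProbabilityMeasure μ]
    (hmom : Integrable (fun x : ℝ => |x| ^ n) μ)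
    (hstat : ∀ ω : ℝ,
      ∫ x, (Complex.I * ω * (∑ l ∈ range (d_f + 1), (a l : ℂ) * (x : ℂ) ^ l)
            + (1 / 2) * (Complex.I * ω) ^ 2 * (∑ l ∈ range (d_g + 1), (b l : ℂ) * (x : ℂ) ^ l)
            + η ω) * Complex.exp (Complex.I * ω * x) ∂μ = 0)
    (φ : ℝ → ℂ) (hφ : ∀ ω : ℝ, φ ω = ∫ x, Complex.exp (Complex.I * ω * x) ∂μ) :
    (∀ k < n, Differentiable ℝ (iteratedDeriv k φ)) ∧
      ∀ ω : ℝ,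
        Complex.I * ω * (∑ l ∈ range (d_f + 1),
            (a l : ℂ) * Complex.I ^ (-(l : ℤ)) * iteratedDeriv l φ ω)
          + (1 / 2) * (Complex.I * ω) ^ 2 * (∑ l ∈ range (d_g + 1),
            (b l : ℂ) * Complex.I ^ (-(l : ℤ)) * iteratedDeriv l φ ω)
          + η ω * φ ω = 0 := by
  have hexp : ∀ ω x : ℝ, I * ω * x = (ω * x * I : ℂ) := fun _ _ => by ring
  obtain rfl : φ = charFun μ := funext fun ω => by simp only [hφ, charFun_apply_real, hexp]
  have hmemLp := memLp_id_of_integrable_abs_pow hmom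
  have hf : MemLp id d_f μ := hmemLp.mono_exponent (by simp [hn])
  have hg : MemLp id d_g μ := hmemLp.mono_exponent (by simp [hn])
  refine ⟨fun k hk => (contDiff_charFun hmemLp).differentiable_iteratedDeriv k (mod_cast hk),
    fun ω => ?_⟩
  have hF := (integrable_sum_pow_mul_cexp hf (fun l => (a l : ℂ)) ω).const_mul (I * ω)
  have hG := (integrable_sum_pow_mul_cexp hg (fun l => (b l : ℂ)) ω).const_mul (1 / 2 * (I * ω) ^ 2)
  have hE : Integrable (fun x : ℝ => η ω * exp (ω * x * I)) μ := by
    simpa using (integrable_pow_mul_cexp (l := 0) (hmemLp.mono_exponent (by simp)) ω).const_mul (η ω)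
  have h := hstat ω
  simp only [hexp] at h
  rw [sum_mul_iteratedDeriv_charFun hf, sum_mul_iteratedDeriv_charFun hg, charFun_apply_real, ← h,
    ← integral_const_mul, ← integral_const_mul, ← integral_const_mul, ← integral_add hF hG,
    ← integral_add ?_ hE]
  · congr 1 with x
    ring
  · exact hF.add hG

/-- ODE for the stationary characteristic function. Let
`f x = ∑_{l=0}^{d_f} a l * x^l` and `G x = ∑_{l=0}^{d_g} b l * x^l` (with `G` playing the
role of `g²`), let `ν` be a Lévy measure (`ν {0} = 0`, finite second moment) with
characteristic exponent `η ω = ∫ (e^{iωy} - 1 - iωy) dν(y)`, and let `μ` be a probability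
measure with finite `n`-th absolute moment, `n = max d_f d_g`, satisfying the stationarity
condition `∫ (iω f(x) + (1/2)(iω)² G(x) + η(ω)) e^{iωx} dμ(x) = 0` for all `ω`. Then the
characteristic function `φ` is `n` times differentiable and satisfies
`iω ∑_l a_l i^{-l} φ^{(l)}(ω) + (1/2)(iω)² ∑_l b_l i^{-l} φ^{(l)}(ω) + η(ω) φ(ω) = 0`. -/
theorem stationary_charFun_ode
    (d_f d_g : ℕ) (a b : ℕ → ℝ)
    (ν : Measure ℝ) (hν0 : ν {0} = 0) (hν2 : Integrable (fun y : ℝ => y ^ 2) ν)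
    (η : ℝ → ℂ)
    (hη : ∀ ω : ℝ, η ω = ∫ y, (Complex.exp (Complex.I * ω * y) - 1 - Complex.I * ω * y) ∂ν)
    (n : ℕ) (hn : n = max d_f d_g)
    (μ : Measure ℝ) [IsProbabilityMeasure μ]
    (hmom : Integrable (fun x : ℝ => |x| ^ n) μ)
    (hstat : ∀ ω : ℝ,
      ∫ x, (Complex.I * ω * (∑ l ∈ range (d_f + 1), (a l : ℂ) * (x : ℂ) ^ l)
            + (1 / 2) * (Complex.I * ω) ^ 2 * (∑ l ∈ range (d_g + 1), (b l : ℂ) * (x : ℂ) ^ l)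
            + η ω) * Complex.exp (Complex.I * ω * x) ∂μ = 0)
    (φ : ℝ → ℂ) (hφ : ∀ ω : ℝ, φ ω = ∫ x, Complex.exp (Complex.I * ω * x) ∂μ) :
    (∀ k < n, Differentiable ℝ (iteratedDeriv k φ)) ∧
      ∀ ω : ℝ,
        Complex.I * ω * (∑ l ∈ range (d_f + 1),
            (a l : ℂ) * Complex.I ^ (-(l : ℤ)) * iteratedDeriv l φ ω)
          + (1 / 2) * (Complex.I * ω) ^ 2 * (∑ l ∈ range (d_g + 1),
            (b l : ℂ) * Complex.I ^ (-(l : ℤ)) * iteratedDeriv l φ ω)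
          + η ω * φ ω = 0 :=
  stationary_charFun_ode_general d_f d_g a b η n hn μ hmom hstat φ hφ
end

section
/- Let a > 0 and b > 0 be real numbers. Then for every ω ∈ ℝ, the integral over (0, ∞) of (e^{iωy} − 1) · a y^{−1} e^{−by} with respect to Lebesgue measure converges and equals −a · Log(1 − iω/b), where Log denotes the principal branch of the complex logarithm. -/
/-!
Differentiate in `ω`: the derivative of the integrand is `i e^{(iω - b) y}`, whose integral over
`(0, ∞)` is `i / (b - iω)`. This is also the derivative of `-Log (1 - iω/b)`, because
`1 - iω/b` has real part `1` and so stays in the slit plane. Both sides vanish at `ω = 0`.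
-/

open MeasureTheory Complex

lemma integrableOn_exp_neg_mul {b : ℝ} (hb : 0 < b) :
    IntegrableOn (fun y : ℝ => Real.exp (-(b * y))) (Set.Ioi 0) := by
  have h := exp_neg_integrableOn_Ioi 0 hb
  simp only [neg_mul] at h
  exact h

noncomputable def gammaLevyIntegrand (b ω y : ℝ) : ℂ :=
  (cexp (I * ω * y) - 1) * ((y : ℂ)⁻¹ * Real.exp (-(b * y)))

lemma norm_gammaLevyIntegrand_le (b ω y : ℝ) :
    ‖gammaLevyIntegrand b ω y‖ ≤ |ω| * Real.exp (-(b * y)) := by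
  rcases eq_or_ne y 0 with rfl | hy
  · simp [gammaLevyIntegrand]
  have hexp : ‖cexp (I * ω * y) - 1‖ ≤ |ω| * |y| := by
    simpa [mul_assoc, abs_mul] using Real.norm_exp_I_mul_ofReal_sub_one_le (x := ω * y)
  calc ‖gammaLevyIntegrand b ω y‖
      = ‖cexp (I * ω * y) - 1‖ * (|y|⁻¹ * Real.exp (-(b * y))) := by
        simp [gammaLevyIntegrand, norm_exp]
    _ ≤ |ω| * |y| * (|y|⁻¹ * Real.exp (-(b * y))) := by gcongr
    _ = |ω| * Real.exp (-(b * y)) := by field_simp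

lemma integrableOn_gammaLevyIntegrand {b : ℝ} (hb : 0 < b) (ω : ℝ) :
    IntegrableOn (gammaLevyIntegrand b ω) (Set.Ioi 0) := by
  have hdom : IntegrableOn (fun y : ℝ => |ω| * Real.exp (-(b * y))) (Set.Ioi 0) :=
    (integrableOn_exp_neg_mul hb).const_mul |ω|
  refine hdom.integrable.mono' ?_ (.of_forall fun y => norm_gammaLevyIntegrand_le b ω y)
  refine ContinuousOn.aestronglyMeasurable ?_ measurableSet_Ioi
  unfold gammaLevyIntegrand
  have hy : ∀ y ∈ Set.Ioi (0 : ℝ), (y : ℂ) ≠ 0 := fun y hy => ofReal_ne_zero.2 hy.ne'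
  fun_prop (disch := assumption)

lemma hasDerivAt_gammaLevyIntegrand (b ω : ℝ) {y : ℝ} (hy : y ≠ 0) :
    HasDerivAt (fun ω => gammaLevyIntegrand b ω y) (I * cexp ((I * ω - b) * y)) ω := by
  have hlin : HasDerivAt (fun ω : ℝ => I * ω * (y : ℂ)) (I * y) ω := by
    simpa [mul_comm, mul_left_comm] using (hasDerivAt_id (ω : ℂ)).comp_ofReal.const_mul (I * y)
  refine ((hlin.cexp.sub_const 1).mul_const ((y : ℂ)⁻¹ * Real.exp (-(b * y)))).congr_deriv ?_
  have hy' : (y : ℂ) ≠ 0 := ofReal_ne_zero.2 hy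
  rw [ofReal_exp, sub_mul, sub_eq_add_neg, exp_add]
  push_cast
  field_simp

lemma hasDerivAt_integral_gammaLevyIntegrand {b : ℝ} (hb : 0 < b) (ω : ℝ) :
    HasDerivAt (fun ω => ∫ y in Set.Ioi 0, gammaLevyIntegrand b ω y) (I / (b - I * ω)) ω := by
  have hre : (I * ω - b : ℂ).re < 0 := by simpa using hb
  have hderiv_integral :
      ∫ y in Set.Ioi (0 : ℝ), I * cexp ((I * ω - b) * y) = I / (b - I * ω) := by
    rw [integral_const_mul, integral_exp_mul_complex_Ioi hre, ofReal_zero, mul_zero, exp_zero,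
      ← neg_sub, div_neg, neg_div, neg_neg, mul_one_div]
  have hderiv_cont : Continuous fun y : ℝ => I * cexp ((I * ω - b) * y) := by fun_prop
  rw [← hderiv_integral]
  refine (hasDerivAt_integral_of_dominated_loc_of_deriv_le
    (F' := fun ω y => I * cexp ((I * ω - b) * y)) (bound := fun y => Real.exp (-(b * y)))
    Filter.univ_mem
    (.of_forall fun ω => (integrableOn_gammaLevyIntegrand hb ω).aestronglyMeasurable)
    (integrableOn_gammaLevyIntegrand hb ω) hderiv_cont.aestronglyMeasurable ?_ ?_ ?_).2
  · refine .of_forall fun y ω _ => le_of_eq ?_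
    simp [norm_exp]
  · exact integrableOn_exp_neg_mul hb
  · rw [ae_restrict_iff' measurableSet_Ioi]
    exact .of_forall fun y hy ω _ => hasDerivAt_gammaLevyIntegrand b ω hy.ne'

lemma hasDerivAt_neg_log_one_sub_I_mul_div {b : ℝ} (hb : b ≠ 0) (ω : ℝ) :
    HasDerivAt (fun ω : ℝ => -log (1 - I * ω / b)) (I / (b - I * ω)) ω := by
  have hre : (1 - I * ω / b : ℂ).re = 1 := by
    rw [show (I * ω / b : ℂ) = ((ω / b : ℝ) : ℂ) * I by push_cast; ring]
    simp
  have hslit : (1 - I * ω / b : ℂ) ∈ slitPlane :=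
    mem_slitPlane_iff.2 (.inl (by rw [hre]; exact one_pos))
  have hinner : HasDerivAt (fun z : ℂ => 1 - I * z / b) (-(I / b)) (ω : ℂ) := by
    simpa using (((hasDerivAt_id (ω : ℂ)).const_mul I).div_const (b : ℂ)).const_sub 1
  have hb' : (b : ℂ) ≠ 0 := ofReal_ne_zero.2 hb
  refine ((hasDerivAt_log hslit).comp (ω : ℂ) hinner).comp_ofReal.neg.congr_deriv ?_
  field_simp

lemma integral_gammaLevyIntegrand {b : ℝ} (hb : 0 < b) (ω : ℝ) :
    ∫ y in Set.Ioi 0, gammaLevyIntegrand b ω y = -log (1 - I * ω / b) := by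
  have hF := hasDerivAt_integral_gammaLevyIntegrand hb
  have hG := hasDerivAt_neg_log_one_sub_I_mul_div hb.ne'
  refine congrFun (eq_of_fderiv_eq (fun ω => (hF ω).differentiableAt)
    (fun ω => (hG ω).differentiableAt)
    (fun ω => (hF ω).hasFDerivAt.fderiv.trans (hG ω).hasFDerivAt.fderiv.symm) 0 ?_) ω
  simp [gammaLevyIntegrand]

theorem gamma_process_char_exponent_general (a b : ℝ) (hb : 0 < b) (ω : ℝ) :
    IntegrableOn
      (fun y : ℝ => (Complex.exp (Complex.I * ω * y) - 1) * ((a : ℂ) * (y : ℂ)⁻¹ * Real.exp (-(b * y))))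
      (Set.Ioi 0) volume ∧
    ∫ y in Set.Ioi (0 : ℝ),
        (Complex.exp (Complex.I * ω * y) - 1) * ((a : ℂ) * (y : ℂ)⁻¹ * Real.exp (-(b * y)))
      = -(a : ℂ) * Complex.log (1 - Complex.I * ω / b) := by
  have hscale :
      (fun y : ℝ => (cexp (I * ω * y) - 1) * ((a : ℂ) * (y : ℂ)⁻¹ * Real.exp (-(b * y))))
        = fun y => (a : ℂ) * gammaLevyIntegrand b ω y := by
    funext y
    simp only [gammaLevyIntegrand]
    ring
  rw [hscale, integral_const_mul, integral_gammaLevyIntegrand hb]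
  exact ⟨(integrableOn_gammaLevyIntegrand hb ω).const_mul _, by ring⟩

/-- For `a, b > 0` and any `ω : ℝ`, the integral over `(0, ∞)` of
`(e^{iωy} - 1) · a y⁻¹ e^{-by}` converges and equals `-a Log(1 - iω/b)`, where `Log` is the
principal branch of the complex logarithm. -/
theorem gamma_process_char_exponent (a b : ℝ) (ha : 0 < a) (hb : 0 < b) (ω : ℝ) :
    IntegrableOn
      (fun y : ℝ => (Complex.exp (Complex.I * ω * y) - 1) * ((a : ℂ) * (y : ℂ)⁻¹ * Real.exp (-(b * y))))
      (Set.Ioi 0) volume ∧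
    ∫ y in Set.Ioi (0 : ℝ),
        (Complex.exp (Complex.I * ω * y) - 1) * ((a : ℂ) * (y : ℂ)⁻¹ * Real.exp (-(b * y)))
      = -(a : ℂ) * Complex.log (1 - Complex.I * ω / b) :=
  gamma_process_char_exponent_general a b hb ω
end

section
/- Let r > 0 and b > 0 be real numbers, and let μ be the Gamma distribution with shape r and rate b. Then the characteristic function of μ satisfies, for every ω ∈ ℝ, ∫ e^{iωx} dμ(x) = exp(−r · Log(1 − iω/b)), where Log denotes the principal branch of the complex logarithm; equivalently, the value of the gamma process τ(t) with Lévy measure a y^{−1} e^{−by} dy at time t (which is Gamma distributed with shape ta and rate b) satisfies E[e^{iωτ(t)}] = e^{−t a Log(1 − iω/b)}. -/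
/-!
Exponential tilting: for `t < b`, `gammaPDFReal r b x * exp (t x)` is `(1 - t / b) ^ (-r)` times
the Gamma density of rate `b - t`, so the moment generating function is `(1 - t / b) ^ (-r)` on
`t < b`. The complex moment generating function and `z ↦ exp (-r Log (1 - z / b))` are both
holomorphic on the half-plane `Re z < b` (there `1 - z / b` has positive real part), so they agree
there by the identity theorem; at `z = iω` the former is the characteristic function.
-/

open MeasureTheory Complex ProbabilityTheory Set Filter Topology

theorem AnalyticOnNhd.eqOn_of_preconnected_of_eventuallyEq_ofReal {f g : ℂ → ℂ} {U : Set ℂ}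
    (hf : AnalyticOnNhd ℂ f U) (hg : AnalyticOnNhd ℂ g U) (hU : IsPreconnected U) {x₀ : ℝ}
    (hx₀ : (x₀ : ℂ) ∈ U) (hfg : ∀ᶠ x : ℝ in 𝓝 x₀, f x = g x) : EqOn f g U := by
  have hofReal : Tendsto ofReal (𝓝[≠] x₀) (𝓝[≠] (x₀ : ℂ)) :=
    continuous_ofReal.continuousWithinAt.tendsto_nhdsWithin fun _ _ ↦ by simp_all
  exact hf.eqOn_of_preconnected_of_frequently_eq hg hU hx₀
    (hofReal.frequently (eventually_nhdsWithin_of_eventually_nhds hfg).frequently)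

section

variable {r b : ℝ}

lemma integral_gammaMeasure_eq_integral_smul {E : Type*} [NormedAddCommGroup E]
    [NormedSpace ℝ E] (hr : 0 < r) (hb : 0 < b) (f : ℝ → E) :
    ∫ x, f x ∂gammaMeasure r b = ∫ x, gammaPDFReal r b x • f x := by
  rw [gammaMeasure, integral_withDensity_eq_integral_toReal_smul (f := gammaPDF r b)
    (measurable_gammaPDFReal r b).ennreal_ofReal
    (ae_of_all _ fun _ ↦ ENNReal.ofReal_lt_top)]
  simp only [gammaPDF, ENNReal.toReal_ofReal (gammaPDFReal_nonneg hr hb _)]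

lemma integral_gammaPDFReal_eq_one (hr : 0 < r) (hb : 0 < b) : ∫ x, gammaPDFReal r b x = 1 := by
  have := isProbabilityMeasure_gammaMeasure hr hb
  simpa using (integral_gammaMeasure_eq_integral_smul hr hb (fun _ ↦ (1 : ℝ))).symm

lemma gammaPDFReal_mul_exp_mul (hb : 0 < b) {t : ℝ} (ht : t < b) (x : ℝ) :
    gammaPDFReal r b x * Real.exp (t * x) = (1 - t / b) ^ (-r) * gammaPDFReal r (b - t) x := by
  have hu : 0 < 1 - t / b := sub_pos.mpr ((div_lt_one hb).mpr ht)
  have hscale : b ^ r = (1 - t / b) ^ (-r) * (b - t) ^ r := by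
    rw [show b - t = (1 - t / b) * b by field_simp, Real.mul_rpow hu.le hb.le, Real.rpow_neg hu.le,
      inv_mul_cancel_left₀ (Real.rpow_pos_of_pos hu r).ne']
  unfold gammaPDFReal
  split_ifs
  · rw [hscale, show -((b - t) * x) = -(b * x) + t * x by ring, Real.exp_add]
    ring
  · simp

lemma mgf_id_gammaMeasure (hr : 0 < r) (hb : 0 < b) {t : ℝ} (ht : t < b) :
    mgf id (gammaMeasure r b) t = (1 - t / b) ^ (-r) := by
  calc mgf id (gammaMeasure r b) t = ∫ x, gammaPDFReal r b x * Real.exp (t * x) := by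
        rw [mgf, integral_gammaMeasure_eq_integral_smul hr hb]; rfl
    _ = ∫ x, (1 - t / b) ^ (-r) * gammaPDFReal r (b - t) x := by
        simp_rw [gammaPDFReal_mul_exp_mul hb ht]
    _ = (1 - t / b) ^ (-r) := by
        rw [integral_const_mul, integral_gammaPDFReal_eq_one hr (sub_pos.mpr ht), mul_one]

lemma Iio_subset_interior_integrableExpSet_gammaMeasure (hr : 0 < r) (hb : 0 < b) :
    Iio b ⊆ interior (integrableExpSet id (gammaMeasure r b)) := by
  have := isProbabilityMeasure_gammaMeasure hr hb
  refine interior_maximal (fun t ht ↦ ?_) isOpen_Iio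
  -- the mgf is `0` off the integrable set
  rw [integrableExpSet, mem_ofPred_eq, ← mgf_pos_iff, mgf_id_gammaMeasure hr hb ht]
  exact Real.rpow_pos_of_pos (sub_pos.mpr ((div_lt_one hb).mpr ht)) _

lemma analyticOnNhd_cexp_neg_mul_log_one_sub_div (r : ℂ) (hb : 0 < b) :
    AnalyticOnNhd ℂ (fun z ↦ cexp (-r * log (1 - z / b))) {z | z.re < b} := fun z hz ↦ by
  have hslit : 1 - z / b ∈ slitPlane := by
    left
    rwa [sub_re, one_re, div_ofReal_re, sub_pos, div_lt_one hb]
  exact (analyticAt_const.mul ((analyticAt_const.sub analyticAt_id.div_const).clog hslit)).cexp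

lemma complexMGF_id_gammaMeasure (hr : 0 < r) (hb : 0 < b) {z : ℂ} (hz : z.re < b) :
    complexMGF id (gammaMeasure r b) z = cexp (-r * log (1 - z / b)) := by
  refine AnalyticOnNhd.eqOn_of_preconnected_of_eventuallyEq_ofReal
    (analyticOnNhd_complexMGF.mono
      fun z hz ↦ Iio_subset_interior_integrableExpSet_gammaMeasure hr hb hz)
    (analyticOnNhd_cexp_neg_mul_log_one_sub_div r hb) (convex_halfSpace_re_lt b).isPreconnected
    (x₀ := 0) (show ((0 : ℝ) : ℂ).re < b by simpa using hb) ?_ hz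
  filter_upwards [Iio_mem_nhds hb] with t ht
  have hu : 0 < 1 - t / b := sub_pos.mpr ((div_lt_one hb).mpr ht)
  rw [complexMGF_ofReal, mgf_id_gammaMeasure hr hb ht, Real.rpow_def_of_pos hu, ofReal_exp,
    ofReal_mul, ofReal_log hu.le]
  push_cast
  ring_nf

end

/-- The characteristic function of the Gamma distribution with shape `r > 0`
and rate `b > 0` is `ω ↦ exp(-r Log(1 - iω/b))`, where `Log` is the principal branch of the
complex logarithm. (For the gamma process, whose value at time `t` is Gamma distributed with
shape `ta` and rate `b`, this gives `E[e^{iωτ(t)}] = e^{-ta Log(1 - iω/b)}`.) -/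
theorem charFun_gammaMeasure (r b : ℝ) (hr : 0 < r) (hb : 0 < b) (ω : ℝ) :
    ∫ x, Complex.exp (Complex.I * ω * x) ∂(gammaMeasure r b)
      = Complex.exp (-(r : ℂ) * Complex.log (1 - Complex.I * ω / b)) := by
  have h := complexMGF_id_gammaMeasure hr hb (z := ω * I) (by simpa using hb)
  rw [complexMGF_id_mul_I, charFun_apply_real] at h
  simpa [mul_comm, mul_left_comm] using h
end

section
/- (Characteristic function of the variance-gamma law) Let σ > 0, a > 0, b > 0, t > 0 be real numbers, and let μ be the probability measure on ℝ obtained as the Gaussian mixture μ = ∫ N(0, σ²τ) dG(τ), where G is the Gamma distribution with shape ta and rate b and N(0, v) denotes the centered Gaussian measure on ℝ with variance v (this is the law of σW(τ(t)) for the variance-gamma process obtained by composing a standard Brownian motion W with a gamma process τ). Then for every ω ∈ ℝ, the characteristic function of μ satisfies ∫ e^{iωx} dμ(x) = exp(−t a · log(1 + σ²ω²/(2b))); in particular it is real-valued. -/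
/-!
Conditionally on the Gamma variable `τ`, the characteristic function of `N(0, σ²τ)` at `ω` is
`exp (-c τ)` with `c = σ²ω²/2`, so the characteristic function of the mixture is the Laplace
transform of the Gamma law at `c`. Multiplying the Gamma(`s`, `b`) density by `exp (-c τ)` gives
`(b / (b + c)) ^ s` times the Gamma(`s`, `b + c`) density, whence the value `(1 + c / b) ^ (-s)`.
-/

open MeasureTheory Complex ProbabilityTheory

namespace MeasureTheory.Measure

lemma integral_bind {α β E : Type*} {mα : MeasurableSpace α} {mβ : MeasurableSpace β}
    [NormedAddCommGroup E] [NormedSpace ℝ E] {μ : Measure α} {κ : Kernel α β} {f : β → E}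
    (hf : Integrable f (κ ∘ₘ μ)) :
    ∫ y, f y ∂(κ ∘ₘ μ) = ∫ x, ∫ y, f y ∂κ x ∂μ := by
  rw [comp_eq_comp_const_apply] at hf ⊢
  exact Kernel.integral_comp hf

end MeasureTheory.Measure

lemma charFun_bind {α E : Type*} {mα : MeasurableSpace α} [NormedAddCommGroup E]
    [InnerProductSpace ℝ E] {mE : MeasurableSpace E} [OpensMeasurableSpace E]
    {μ : Measure α} [IsFiniteMeasure μ] {κ : Kernel α E} [IsMarkovKernel κ] (t : E) :
    charFun (κ ∘ₘ μ) t = ∫ x, charFun (κ x) t ∂μ := by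
  simp_rw [charFun_apply]
  exact Measure.integral_bind ((integrable_const (1 : ℝ)).mono (by fun_prop) (by simp))

lemma gammaPDFReal_mul_exp_neg_mul {s b c : ℝ} (hb : 0 < b) (hbc : 0 < b + c) (τ : ℝ) :
    gammaPDFReal s b τ * Real.exp (-(c * τ)) = (b / (b + c)) ^ s * gammaPDFReal s (b + c) τ := by
  unfold gammaPDFReal
  split_ifs
  · rw [mul_assoc, ← Real.exp_add, show -(b * τ) + -(c * τ) = -((b + c) * τ) by ring,
      Real.div_rpow hb.le hbc.le]
    field_simp
  · simp

lemma integral_gammaPDFReal_eq_one_s12 {s b : ℝ} (hs : 0 < s) (hb : 0 < b) :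
    ∫ τ, gammaPDFReal s b τ = 1 := by
  rw [integral_eq_lintegral_of_nonneg_ae (ae_of_all _ (gammaPDFReal_nonneg hs hb))
    (measurable_gammaPDFReal s b).aestronglyMeasurable]
  change (∫⁻ τ, gammaPDF s b τ).toReal = 1
  simp [hs, hb]

lemma integral_exp_neg_mul_gammaMeasure {s b c : ℝ} (hs : 0 < s) (hb : 0 < b) (hbc : 0 < b + c) :
    ∫ τ, Real.exp (-(c * τ)) ∂gammaMeasure s b = (b / (b + c)) ^ s := by
  rw [gammaMeasure, integral_withDensity_eq_integral_toReal_smul (f := gammaPDF s b)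
    (measurable_gammaPDFReal s b).ennreal_ofReal (ae_of_all _ fun _ ↦ ENNReal.ofReal_lt_top)]
  simp_rw [gammaPDF, ENNReal.toReal_ofReal (gammaPDFReal_nonneg hs hb _), smul_eq_mul,
    gammaPDFReal_mul_exp_neg_mul hb hbc]
  rw [integral_const_mul, integral_gammaPDFReal_eq_one_s12 hs hbc, mul_one]

lemma ae_nonneg_gammaMeasure (s b : ℝ) : ∀ᵐ τ ∂gammaMeasure s b, 0 ≤ τ := by
  rw [ae_iff, show {τ : ℝ | ¬0 ≤ τ} = Set.Iio 0 by ext; simp, gammaMeasure,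
    withDensity_apply _ measurableSet_Iio]
  exact lintegral_gammaPDF_of_nonpos le_rfl

lemma charFun_gaussianReal_zero_mean (v : NNReal) (ω : ℝ) :
    charFun (gaussianReal 0 v) ω = (Real.exp (-(v * ω ^ 2 / 2)) : ℂ) := by
  rw [charFun_gaussianReal]
  push_cast
  ring_nf

noncomputable def scaledGaussianKernel (σ : ℝ) : Kernel ℝ ℝ where
  toFun τ := gaussianReal 0 (σ ^ 2 * τ).toNNReal
  measurable' := measurable_gaussianReal.comp (measurable_const.prodMk (by fun_prop))

@[simp]
lemma scaledGaussianKernel_apply (σ τ : ℝ) :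
    scaledGaussianKernel σ τ = gaussianReal 0 (σ ^ 2 * τ).toNNReal := rfl

instance (σ : ℝ) : IsMarkovKernel (scaledGaussianKernel σ) :=
  ⟨fun _ ↦ inferInstanceAs (IsProbabilityMeasure (gaussianReal _ _))⟩

theorem charFun_varianceGamma_general (σ a b t : ℝ) (ha : 0 < a) (hb : 0 < b)
    (ht : 0 < t)
    (μ : Measure ℝ)
    (hμ : μ = (gammaMeasure (t * a) b).bind
      (fun τ : ℝ => gaussianReal 0 (Real.toNNReal (σ ^ 2 * τ)))) :
    ∀ ω : ℝ,
      ∫ x, Complex.exp (Complex.I * ω * x) ∂μ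
        = (Real.exp (-(t * a) * Real.log (1 + σ ^ 2 * ω ^ 2 / (2 * b))) : ℂ) := by
  intro ω
  have hs : 0 < t * a := mul_pos ht ha
  have := isProbabilityMeasure_gammaMeasure hs hb
  set c := σ ^ 2 * ω ^ 2 / 2 with hc
  have hbc : 0 < b + c := by positivity
  calc ∫ x, Complex.exp (Complex.I * ω * x) ∂μ
      = charFun (scaledGaussianKernel σ ∘ₘ gammaMeasure (t * a) b) ω := by
        simp_rw [hμ, charFun_apply_real, mul_right_comm _ _ I, mul_comm _ I]
        rfl
    _ = ∫ τ, (Real.exp (-(c * τ)) : ℂ) ∂gammaMeasure (t * a) b := by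
        rw [charFun_bind]
        refine integral_congr_ae ?_
        filter_upwards [ae_nonneg_gammaMeasure (t * a) b] with τ hτ
        rw [scaledGaussianKernel_apply, charFun_gaussianReal_zero_mean,
          Real.coe_toNNReal _ (by positivity), hc]
        ring_nf
    _ = ((b / (b + c)) ^ (t * a) : ℝ) := by
        rw [integral_complex_ofReal, integral_exp_neg_mul_gammaMeasure hs hb hbc]
    _ = _ := by
        have hinv : b / (b + c) = (1 + σ ^ 2 * ω ^ 2 / (2 * b))⁻¹ := by
          rw [hc]; field_simp
        rw [hinv, Real.rpow_def_of_pos (by positivity), Real.log_inv, mul_comm, neg_mul_comm]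

/-- Characteristic function of the variance-gamma law. Let `μ` be the
Gaussian mixture `μ = ∫ N(0, σ²τ) dG(τ)` where `G` is the Gamma distribution with shape `ta`
and rate `b` (the law of the variance-gamma process `σW(τ(t))`). Then for every `ω`,
`∫ e^{iωx} dμ(x) = exp(-ta log(1 + σ²ω²/(2b)))`; in particular it is real-valued. -/
theorem charFun_varianceGamma (σ a b t : ℝ) (hσ : 0 < σ) (ha : 0 < a) (hb : 0 < b)
    (ht : 0 < t)
    (μ : Measure ℝ)
    (hμ : μ = (gammaMeasure (t * a) b).bind
      (fun τ : ℝ => gaussianReal 0 (Real.toNNReal (σ ^ 2 * τ)))) :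
    ∀ ω : ℝ,
      ∫ x, Complex.exp (Complex.I * ω * x) ∂μ
        = (Real.exp (-(t * a) * Real.log (1 + σ ^ 2 * ω ^ 2 / (2 * b))) : ℂ) :=
  charFun_varianceGamma_general σ a b t ha hb ht μ hμ
end
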